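/- arXiv:1503.06747 — 10 statements merged into one kernel-verified Lean document; each statement's English description precedes it below -/
import Mathlib

section
/- Let a_1,...,a_n and b_1,...,b_n be real numbers with sum of a_i equal to 0 and sum of b_i equal to 0. Then |∑_i a_i b_i^2| ≤ ((n-2)/√(n(n-1))) (∑_i a_i^2)^{1/2} (∑_i b_i^2). -/
/-!
Since `∑ aᵢ = 0`, the sum `∑ aᵢ bᵢ²` does not change when `bᵢ²` is replaced by `bᵢ² - s / n`,
where `s = ∑ bᵢ²`; Cauchy–Schwarz then bounds its square by `(∑ aᵢ²) (∑ bᵢ⁴ - s² / n)`.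
What remains is the sharp fourth-moment bound `n (n - 1) ∑ bᵢ⁴ ≤ (n² - 3n + 3) s²` for
`∑ bᵢ = 0`, with equality at `b = (n - 1, -1, …, -1)`.  For `n ≥ 3` it follows from the
nonnegativity of `∑_{i ≠ j} ((n - 1)(n - 2) bᵢ bⱼ + (n - 1)(bᵢ² + bⱼ²) - s)²`, which equals
`(n - 1)(n - 2) ((n² - 3n + 3) s² - n (n - 1) ∑ bᵢ⁴)`.
-/

open Finset

variable {ι : Type*} [Fintype ι]

theorem sq_sum_mul_le_of_sum_eq_zero {a : ι → ℝ} (ha : ∑ i, a i = 0) (x : ι → ℝ) (c : ℝ) :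
    (∑ i, a i * x i) ^ 2 ≤ (∑ i, a i ^ 2) * ∑ i, (x i - c) ^ 2 := by
  have hshift : ∑ i, a i * x i = ∑ i, a i * (x i - c) := by
    simp only [mul_sub, sum_sub_distrib, ← sum_mul, ha, zero_mul, sub_zero]
  rw [hshift]
  exact sum_mul_sq_le_sq_mul_sq univ a fun i => x i - c

theorem sum_sub_mean_sq (x : ι → ℝ) :
    ∑ i, (x i - (∑ j, x j) / Fintype.card ι) ^ 2
      = ∑ i, x i ^ 2 - (∑ i, x i) ^ 2 / Fintype.card ι := by
  rcases isEmpty_or_nonempty ι with hι | hι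
  · simp
  have hn : (Fintype.card ι : ℝ) ≠ 0 := by positivity
  simp only [sub_sq, sum_add_distrib, sum_sub_distrib, ← sum_mul, ← mul_sum, sum_const,
    card_univ, nsmul_eq_mul]
  field_simp
  ring

theorem sum_poly_four (x : ι → ℝ) (c₄ c₃ c₂ c₁ c₀ : ℝ) :
    ∑ i, (c₄ * x i ^ 4 + c₃ * x i ^ 3 + c₂ * x i ^ 2 + c₁ * x i + c₀)
      = c₄ * ∑ i, x i ^ 4 + c₃ * ∑ i, x i ^ 3 + c₂ * ∑ i, x i ^ 2 + c₁ * ∑ i, x i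
        + Fintype.card ι * c₀ := by
  simp only [sum_add_distrib, ← mul_sum, sum_const, card_univ, nsmul_eq_mul]

theorem card_mul_sum_pow_four_le_of_three_le {b : ι → ℝ} (hb : ∑ i, b i = 0)
    (hn : 3 ≤ Fintype.card ι) :
    (Fintype.card ι : ℝ) * (Fintype.card ι - 1) * ∑ i, b i ^ 4
      ≤ ((Fintype.card ι : ℝ) ^ 2 - 3 * Fintype.card ι + 3) * (∑ i, b i ^ 2) ^ 2 := by
  classical
  have hn3 : (3 : ℝ) ≤ Fintype.card ι := by exact_mod_cast hn
  set n : ℝ := (Fintype.card ι : ℝ)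
  set s := ∑ i, b i ^ 2
  set p := ∑ i, b i ^ 3
  set q := ∑ i, b i ^ 4
  -- every square vanishes at `b = (n - 1, -1, …, -1)`, where `s = n (n - 1)`
  set F : ι → ι → ℝ := fun i j =>
    ((n - 1) * (n - 2) * b i * b j + (n - 1) * (b i ^ 2 + b j ^ 2) - s) ^ 2
  have hrow : ∀ i, ∑ j, F i j = n * (n - 1) ^ 2 * b i ^ 4 + 0 * b i ^ 3
      + ((n - 1) ^ 2 * (n - 2) ^ 2 + 2 * (n - 1) ^ 2 - 2 * n * (n - 1)) * s * b i ^ 2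
      + 2 * (n - 1) ^ 2 * (n - 2) * p * b i
      + ((n - 1) ^ 2 * q + n * s ^ 2 - 2 * (n - 1) * s ^ 2) := by
    intro i
    have hexp : ∀ j, F i j = (n - 1) ^ 2 * b j ^ 4 + 2 * (n - 1) ^ 2 * (n - 2) * b i * b j ^ 3
        + (((n - 1) ^ 2 * (n - 2) ^ 2 + 2 * (n - 1) ^ 2) * b i ^ 2 - 2 * (n - 1) * s) * b j ^ 2
        + (2 * (n - 1) ^ 2 * (n - 2) * b i ^ 3 - 2 * (n - 1) * (n - 2) * s * b i) * b j
        + ((n - 1) ^ 2 * b i ^ 4 - 2 * (n - 1) * s * b i ^ 2 + s ^ 2) := fun j => by ring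
    rw [sum_congr rfl fun j _ => hexp j, sum_poly_four, hb]
    ring
  have htotal : ∑ i, ∑ j, F i j = 2 * n * (n - 1) ^ 2 * q
      + ((n - 1) ^ 2 * (n - 2) ^ 2 + 2 * (n - 1) ^ 2 - 4 * n * (n - 1) + n ^ 2) * s ^ 2 := by
    rw [sum_congr rfl fun i _ => hrow i, sum_poly_four, hb]
    ring
  have hdiag : ∑ i, F i i = n ^ 2 * (n - 1) ^ 2 * q - 2 * n * (n - 1) * s ^ 2 + n * s ^ 2 := by
    have hexp : ∀ i, F i i = n ^ 2 * (n - 1) ^ 2 * b i ^ 4 + 0 * b i ^ 3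
        + (-2 * n * (n - 1) * s) * b i ^ 2 + 0 * b i + s ^ 2 := fun i => by ring
    rw [sum_congr rfl fun i _ => hexp i, sum_poly_four]
    ring
  have hoff : 0 ≤ ∑ i, ∑ j ∈ univ.erase i, F i j :=
    sum_nonneg fun i _ => sum_nonneg fun j _ => sq_nonneg _
  have hfactor : ∑ i, ∑ j ∈ univ.erase i, F i j
      = (n - 1) * (n - 2) * ((n ^ 2 - 3 * n + 3) * s ^ 2 - n * (n - 1) * q) := by
    simp only [sum_erase_eq_sub (mem_univ _), sum_sub_distrib, htotal, hdiag]
    ring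
  have hpos : 0 < (n - 1) * (n - 2) := by nlinarith
  rw [hfactor, mul_nonneg_iff_of_pos_left hpos] at hoff
  linarith

theorem card_mul_sum_pow_four_le {b : ι → ℝ} (hb : ∑ i, b i = 0) :
    (Fintype.card ι : ℝ) * (Fintype.card ι - 1) * ∑ i, b i ^ 4
      ≤ ((Fintype.card ι : ℝ) ^ 2 - 3 * Fintype.card ι + 3) * (∑ i, b i ^ 2) ^ 2 := by
  classical
  rcases lt_trichotomy (Fintype.card ι) 2 with hlt | htwo | hgt
  · have hcard : (Fintype.card ι : ℝ) * (Fintype.card ι - 1) = 0 := by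
      interval_cases h : Fintype.card ι <;> simp
    have hcoeff : (0 : ℝ) < (Fintype.card ι : ℝ) ^ 2 - 3 * Fintype.card ι + 3 := by
      nlinarith [sq_nonneg ((Fintype.card ι : ℝ) - 3 / 2)]
    rw [hcard, zero_mul]
    exact mul_nonneg hcoeff.le (sq_nonneg _)
  · obtain ⟨x, y, hxy, huniv⟩ := card_eq_two.1 htwo
    simp only [htwo, huniv, sum_pair hxy] at hb ⊢
    rw [eq_neg_of_add_eq_zero_right hb]
    norm_num
    ring_nf
    exact le_rfl
  · exact card_mul_sum_pow_four_le_of_three_le hb hgt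

theorem stmt_0 (n : ℕ) (hn : 2 ≤ n) (a b : Fin n → ℝ)
    (ha : ∑ i, a i = 0) (hb : ∑ i, b i = 0) :
    |∑ i, a i * (b i)^2| ≤
      ((n : ℝ) - 2) / Real.sqrt (n * (n - 1)) * Real.sqrt (∑ i, (a i)^2) * (∑ i, (b i)^2) := by
  have hn' : (2 : ℝ) ≤ n := by exact_mod_cast hn
  have hcs := sq_sum_mul_le_of_sum_eq_zero ha (fun i => b i ^ 2)
    ((∑ j, b j ^ 2) / Fintype.card (Fin n))
  have hk := card_mul_sum_pow_four_le hb
  rw [sum_sub_mean_sq] at hcs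
  simp only [Fintype.card_fin, ← pow_mul] at hcs hk
  set s := ∑ i, b i ^ 2
  set q := ∑ i, b i ^ 4
  set A := ∑ i, a i ^ 2
  have hvar : q - s ^ 2 / n ≤ ((n : ℝ) - 2) ^ 2 / (n * (n - 1)) * s ^ 2 := by
    rw [div_mul_eq_mul_div, le_div_iff₀ (by nlinarith)]
    field_simp
    nlinarith
  have hA : 0 ≤ A := sum_nonneg fun i _ => sq_nonneg _
  have hs : 0 ≤ s := sum_nonneg fun i _ => sq_nonneg _
  have hn2 : (0 : ℝ) ≤ n - 2 := by linarith
  refine abs_le_of_sq_le_sq ?_ (by positivity)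
  rw [mul_pow, mul_pow, div_pow, Real.sq_sqrt (by nlinarith), Real.sq_sqrt hA]
  calc _ ≤ A * (q - s ^ 2 / n) := hcs
    _ ≤ A * (((n : ℝ) - 2) ^ 2 / (n * (n - 1)) * s ^ 2) := by gcongr
    _ = _ := by ring
end

section
/- Let a_1,...,a_n be real numbers with ∑_i a_i = 0. Then |∑_i a_i^3| ≤ ((n-2)/√(n(n-1))) (∑_i a_i^2)^{3/2}. -/
/-!
Put `Q = ∑ aᵢ²` and `s = √(Q / (n(n-1)))`. Cauchy–Schwarz on the other `n - 1` entries, whose sum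
is `-aᵢ`, gives `aᵢ ≤ (n-1)s` for every `i`. Hence `∑ (aᵢ + s)² (aᵢ - (n-1)s) ≤ 0`; expanding with
`∑ aᵢ = 0` and `n(n-1)s² = Q` turns this into `∑ aᵢ³ ≤ (n-2) s Q`, which is the claimed upper bound.
The lower bound is the same inequality for `-a`.
-/

open Finset

variable {ι : Type*} [Fintype ι] {a : ι → ℝ}

theorem card_mul_sq_le_of_sum_eq_zero (ha : ∑ j, a j = 0) (i : ι) :
    Fintype.card ι * a i ^ 2 ≤ (Fintype.card ι - 1) * ∑ j, a j ^ 2 := by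
  classical
  have hi : i ∈ (univ : Finset ι) := mem_univ i
  have h_rest : ∑ j ∈ univ.erase i, a j = -a i := by
    linarith [sum_erase_add univ a hi]
  have h_rest_sq : ∑ j ∈ univ.erase i, a j ^ 2 = ∑ j, a j ^ 2 - a i ^ 2 := by
    linarith [sum_erase_add univ (fun j => a j ^ 2) hi]
  have h_card : ((univ.erase i).card : ℝ) = Fintype.card ι - 1 := by
    rw [card_erase_of_mem hi, card_univ,
      Nat.cast_sub (Fintype.card_pos_iff.mpr ⟨i⟩), Nat.cast_one]
  have h_cs := sq_sum_le_card_mul_sum_sq (s := univ.erase i) (f := a)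
  rw [h_rest, h_rest_sq, h_card] at h_cs
  linarith

theorem le_of_sum_eq_zero_of_card_mul_sq_eq (ha : ∑ j, a j = 0) {s : ℝ} (hs : 0 ≤ s)
    (hQ : Fintype.card ι * (Fintype.card ι - 1) * s ^ 2 = ∑ j, a j ^ 2) (i : ι) :
    a i ≤ (Fintype.card ι - 1) * s := by
  set n : ℝ := (Fintype.card ι : ℝ)
  have hn : 1 ≤ n := Nat.one_le_cast.mpr (Fintype.card_pos_iff.mpr ⟨i⟩)
  have h_sq : n * a i ^ 2 ≤ n * ((n - 1) * s) ^ 2 := by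
    calc n * a i ^ 2 ≤ (n - 1) * ∑ j, a j ^ 2 := card_mul_sq_le_of_sum_eq_zero ha i
      _ = n * ((n - 1) * s) ^ 2 := by rw [← hQ]; ring
  exact abs_le_of_sq_le_sq' (le_of_mul_le_mul_left h_sq (by linarith))
    (mul_nonneg (by linarith) hs) |>.2

theorem sum_cube_le_of_card_mul_sq_eq (ha : ∑ j, a j = 0) {s : ℝ} (hs : 0 ≤ s)
    (hQ : Fintype.card ι * (Fintype.card ι - 1) * s ^ 2 = ∑ j, a j ^ 2) :
    ∑ j, a j ^ 3 ≤ (Fintype.card ι - 2) * s * ∑ j, a j ^ 2 := by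
  set n : ℝ := (Fintype.card ι : ℝ)
  have h_nonpos : ∑ j, (a j + s) ^ 2 * (a j - (n - 1) * s) ≤ 0 :=
    sum_nonpos fun j _ => mul_nonpos_of_nonneg_of_nonpos (sq_nonneg _)
      (sub_nonpos.2 (le_of_sum_eq_zero_of_card_mul_sq_eq ha hs hQ j))
  have h_expand : ∑ j, (a j + s) ^ 2 * (a j - (n - 1) * s)
      = ∑ j, a j ^ 3 + (3 - n) * s * ∑ j, a j ^ 2 + (3 - 2 * n) * s ^ 2 * ∑ j, a j
        - n * (n - 1) * s ^ 3 := by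
    simp only [fun j => show (a j + s) ^ 2 * (a j - (n - 1) * s)
      = a j ^ 3 + (3 - n) * s * a j ^ 2 + (3 - 2 * n) * s ^ 2 * a j - (n - 1) * s ^ 3 by ring,
      sum_sub_distrib, sum_add_distrib, ← mul_sum, sum_const, card_univ, nsmul_eq_mul, n]
    ring
  have h_top : n * (n - 1) * s ^ 3 = s * ∑ j, a j ^ 2 := by rw [← hQ]; ring
  rw [h_expand, ha, h_top] at h_nonpos
  linarith

theorem abs_sum_cube_le_of_card_mul_sq_eq (ha : ∑ j, a j = 0) {s : ℝ} (hs : 0 ≤ s)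
    (hQ : Fintype.card ι * (Fintype.card ι - 1) * s ^ 2 = ∑ j, a j ^ 2) :
    |∑ j, a j ^ 3| ≤ (Fintype.card ι - 2) * s * ∑ j, a j ^ 2 := by
  have h_neg := sum_cube_le_of_card_mul_sq_eq (a := -a) (by simp [ha]) hs (by simpa using hQ)
  simp only [Pi.neg_apply, neg_sq, Odd.neg_pow (by decide : Odd 3), sum_neg_distrib] at h_neg
  exact abs_le.2 ⟨by linarith, sum_cube_le_of_card_mul_sq_eq ha hs hQ⟩

theorem stmt_1 (n : ℕ) (hn : 2 ≤ n) (a : Fin n → ℝ) (ha : ∑ i, a i = 0) :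
    |∑ i, (a i)^3| ≤
      ((n : ℝ) - 2) / Real.sqrt (n * (n - 1)) * (∑ i, (a i)^2) ^ ((3 : ℝ)/2) := by
  set Q := ∑ i, a i ^ 2
  have hQ : 0 ≤ Q := sum_nonneg fun i _ => sq_nonneg (a i)
  have hn1 : (1 : ℝ) < n := by exact_mod_cast hn
  have hd : (0 : ℝ) < n * (n - 1) := by nlinarith
  set s := √Q / √(n * (n - 1))
  have hs_sq : n * (n - 1) * s ^ 2 = Q := by
    rw [div_pow, Real.sq_sqrt hQ, Real.sq_sqrt hd.le]
    field_simp [(sub_pos.2 hn1).ne']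
  have h_rpow : Q ^ ((3 : ℝ) / 2) = √Q * Q := by
    rw [show (3 : ℝ) / 2 = 1 / 2 + 1 by norm_num, Real.rpow_add' hQ (by norm_num),
      Real.rpow_one, ← Real.sqrt_eq_rpow]
  have h_bound := abs_sum_cube_le_of_card_mul_sq_eq ha (s := s) (by positivity)
    (by simpa only [Fintype.card_fin] using hs_sq)
  rw [Fintype.card_fin] at h_bound
  rw [h_rpow]
  convert h_bound using 1
  ring
end

section
/- For n ≥ 6, c < 0 and y > -n²c, one has ((n-2)/√(n(n-1)))·√(y·α̊(y)) = y/n - α̊(y) + nc. -/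
/-!
Put `s = √(y² + 4(n-1)cy)` and `T = n s - (n-2) y`. Clearing denominators in the definition of
`α̊` gives `4n(n-1)·y·α̊(y) = T²` and `2n(n-1)·(y/n - α̊(y) + nc) = (n-2)·T`, so both sides equal
`(n-2)T / (2n(n-1))` once we know `T ≥ 0`. That follows from
`(ns)² - ((n-2)y)² = 4(n-1)·y·(y + n²c) > 0`.
-/

open Real

/-- `α̊` with the square root `√(y² + 4(n-1)cy)` replaced by an arbitrary `s`. -/
noncomputable def alphaCirc (n c s y : ℝ) : ℝ :=
  n * c + ((n ^ 2 - 2 * n + 2) / (2 * (n - 1) * n)) * y - ((n - 2) / (2 * (n - 1))) * s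

section

variable {n c s y : ℝ}

lemma sq_add_mul_nonneg (hc : c ≤ 0) (hy : 0 ≤ y) (hyc : 0 ≤ y + n ^ 2 * c) :
    0 ≤ y ^ 2 + 4 * (n - 1) * c * y := by
  have : 0 ≤ y + 4 * (n - 1) * c := by nlinarith [sq_nonneg (n - 2)]
  nlinarith

lemma sub_two_mul_le_mul (hn : 1 ≤ n) (hy : 0 ≤ y) (hyc : 0 ≤ y + n ^ 2 * c) (hs0 : 0 ≤ s)
    (hs : s ^ 2 = y ^ 2 + 4 * (n - 1) * c * y) :
    (n - 2) * y ≤ n * s := by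
  have hsq : ((n - 2) * y) ^ 2 ≤ (n * s) ^ 2 := by
    have : (n * s) ^ 2 - ((n - 2) * y) ^ 2 = 4 * (n - 1) * y * (y + n ^ 2 * c) := by
      linear_combination n ^ 2 * hs
    nlinarith [mul_nonneg (mul_nonneg (by linarith : (0 : ℝ) ≤ 4 * (n - 1)) hy) hyc]
  exact (le_abs_self _).trans (abs_le_of_sq_le_sq hsq (by positivity))

lemma mul_alphaCirc_eq (hn0 : n ≠ 0) (hn1 : n - 1 ≠ 0) (hs : s ^ 2 = y ^ 2 + 4 * (n - 1) * c * y) :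
    y * alphaCirc n c s y = (n * s - (n - 2) * y) ^ 2 / (4 * (n - 1) * n) := by
  unfold alphaCirc
  field_simp
  linear_combination (-2 * n ^ 2) * hs

lemma div_sub_alphaCirc_add_mul_eq (hn0 : n ≠ 0) (hn1 : n - 1 ≠ 0) :
    y / n - alphaCirc n c s y + n * c = (n - 2) * (n * s - (n - 2) * y) / (2 * (n - 1) * n) := by
  unfold alphaCirc
  field_simp
  ring

theorem sub_two_div_sqrt_mul_sqrt_mul_alphaCirc (hn : 1 < n) (hy : 0 ≤ y)
    (hyc : 0 ≤ y + n ^ 2 * c) (hs0 : 0 ≤ s) (hs : s ^ 2 = y ^ 2 + 4 * (n - 1) * c * y) :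
    (n - 2) / √(n * (n - 1)) * √(y * alphaCirc n c s y) = y / n - alphaCirc n c s y + n * c := by
  have hn0 : n ≠ 0 := by positivity
  have hn1 : n - 1 ≠ 0 := by linarith
  have hT : 0 ≤ n * s - (n - 2) * y := sub_nonneg.2 (sub_two_mul_le_mul hn.le hy hyc hs0 hs)
  have hK : 0 < √(n * (n - 1)) := sqrt_pos.2 (by nlinarith)
  have hK2 : √(n * (n - 1)) ^ 2 = n * (n - 1) := sq_sqrt (by nlinarith)
  have hsqrt : √(y * alphaCirc n c s y) = (n * s - (n - 2) * y) / (2 * √(n * (n - 1))) := by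
    rw [mul_alphaCirc_eq hn0 hn1 hs, sqrt_eq_iff_eq_sq (by positivity) (by positivity), div_pow,
      mul_pow, hK2]
    ring
  rw [hsqrt, div_sub_alphaCirc_add_mul_eq hn0 hn1, div_mul_div_comm]
  congr 1
  linear_combination 2 * hK2

end

theorem stmt_3 (n : ℕ) (hn : 6 ≤ n) (c : ℝ) (hc : c < 0) (y : ℝ) (hy : y > -(n^2 : ℝ) * c)
    (α : ℝ → ℝ)
    (hα : ∀ z : ℝ, α z = n * c + ((n^2 - 2*n + 2 : ℝ) / (2 * (n - 1) * n)) * z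
      - ((n - 2 : ℝ) / (2 * (n - 1))) * Real.sqrt (z^2 + 4 * (n - 1) * c * z)) :
    ((n : ℝ) - 2) / Real.sqrt (n * (n - 1)) * Real.sqrt (y * α y) = y / n - α y + n * c := by
  have hn' : (6 : ℝ) ≤ n := by exact_mod_cast hn
  have hyc : 0 ≤ y + n ^ 2 * c := by linarith
  have hy0 : 0 ≤ y := by nlinarith
  have hdisc := sq_add_mul_nonneg hc.le hy0 hyc
  have hαy : α y = alphaCirc n c (√(y ^ 2 + 4 * (n - 1) * c * y)) y := hα y
  rw [hαy]
  exact sub_two_div_sqrt_mul_sqrt_mul_alphaCirc (by linarith) hy0 hyc (sqrt_nonneg _)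
    (sq_sqrt hdisc)
end

section
/- For n ≥ 6, c < 0 and y > -n²c, the derivative of α̊ satisfies 0 < α̊'(y) < 1/(n(n-1)). -/
/-!
The derivative is `α̊'(y) = A - B r` with `A - B = 1/(n(n-1))`, `B > 0`, and `r` the slope of
`y ↦ √(y² + 4(n-1)cy)`. Writing the radicand as `p² - k²` with `p = y + 2(n-1)c`, `k = 2(n-1)c`
gives `r = p/√(p² - k²) > 1`, which is the upper bound; the lower bound is
`r < A/B = (n²-2n+2)/(n(n-2))`, which holds exactly when `y > -n²c`.
-/

open Real

lemma hasDerivAt_affine_sub_mul_sqrt_quadratic (a A B b y : ℝ) (hq : 0 < y ^ 2 + b * y) :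
    HasDerivAt (fun z => a + A * z - B * √(z ^ 2 + b * z))
      (A - B * ((2 * y + b) / (2 * √(y ^ 2 + b * y)))) y := by
  have hquad : HasDerivAt (fun z => z ^ 2 + b * z) (2 * y + b) y := by
    simpa [Pi.add_def] using (hasDerivAt_pow 2 y).add ((hasDerivAt_id y).const_mul b)
  have hsqrt := (hquad.sqrt hq.ne').const_mul B
  have haff : HasDerivAt (fun z => a + A * z) A y := by
    simpa using ((hasDerivAt_id y).const_mul A).const_add a
  exact haff.sub hsqrt

lemma one_lt_div_sqrt_sq_sub_sq {p k : ℝ} (hp : 0 < p) (hk : k ≠ 0) (hkp : k ^ 2 < p ^ 2) :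
    1 < p / √(p ^ 2 - k ^ 2) := by
  have hs : 0 < √(p ^ 2 - k ^ 2) := sqrt_pos.mpr (by linarith)
  rw [one_lt_div hs, sqrt_lt' hp]
  have := pow_pos (abs_pos.mpr hk) 2
  rw [sq_abs] at this
  linarith

lemma div_sqrt_sq_sub_sq_lt {p k M : ℝ} (hp : 0 < p) (hM : 0 < M)
    (h : p ^ 2 < M ^ 2 * (p ^ 2 - k ^ 2)) : p / √(p ^ 2 - k ^ 2) < M := by
  have hq : 0 < p ^ 2 - k ^ 2 := pos_of_mul_pos_right ((pow_pos hp 2).trans h) (sq_nonneg M)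
  rw [div_lt_iff₀ (sqrt_pos.mpr hq)]
  refine lt_of_pow_lt_pow_left₀ 2 (by positivity) ?_
  rwa [mul_pow, sq_sqrt hq.le]

section
variable {N c y : ℝ}

lemma sq_add_four_mul_sub_one_mul_pos (hN : 2 < N) (hc : c < 0) (hy : -N ^ 2 * c < y) :
    0 < y ^ 2 + 4 * (N - 1) * c * y := by
  have hy0 : 0 < y := by nlinarith
  have : 0 < y + 4 * (N - 1) * c := by
    nlinarith [mul_pos (pow_pos (sub_pos.mpr hN) 2) (neg_pos.mpr hc)]
  nlinarith

lemma sqrt_quadratic_slope_bounds (hN : 2 < N) (hc : c < 0) (hy : -N ^ 2 * c < y) :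
    1 < (2 * y + 4 * (N - 1) * c) / (2 * √(y ^ 2 + 4 * (N - 1) * c * y)) ∧
      (2 * y + 4 * (N - 1) * c) / (2 * √(y ^ 2 + 4 * (N - 1) * c * y))
        < (N ^ 2 - 2 * N + 2) / (N * (N - 2)) := by
  set p := y + 2 * (N - 1) * c
  set k := 2 * (N - 1) * c
  have hratio : (2 * y + 4 * (N - 1) * c) / (2 * √(y ^ 2 + 4 * (N - 1) * c * y))
      = p / √(p ^ 2 - k ^ 2) := by
    rw [show y ^ 2 + 4 * (N - 1) * c * y = p ^ 2 - k ^ 2 by ring, mul_comm 2, ← div_div]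
    congr 1
    ring
  have hk : k ≠ 0 := by simp only [k]; nlinarith
  have hp : -(N ^ 2 - 2 * N + 2) * c < p := by simp only [p]; linarith
  have hM : 0 < N ^ 2 - 2 * N + 2 := by nlinarith
  have hp0 : 0 < p := by nlinarith [mul_pos hM (neg_pos.mpr hc)]
  have hkp : k ^ 2 < p ^ 2 := by
    have := sq_add_four_mul_sub_one_mul_pos hN hc hy
    simp only [p, k]; nlinarith
  rw [hratio]
  refine ⟨one_lt_div_sqrt_sq_sub_sq hp0 hk hkp, div_sqrt_sq_sub_sq_lt hp0
    (div_pos hM (mul_pos (by linarith) (by linarith))) ?_⟩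
  -- since (N² - 2N + 2)² - N²(N - 2)² = 4(N - 1)², the claim reduces to p > -(N² - 2N + 2)c
  rw [div_pow, div_mul_eq_mul_div, lt_div_iff₀ (by positivity)]
  have hsq : (-(N ^ 2 - 2 * N + 2) * c) ^ 2 < p ^ 2 :=
    pow_lt_pow_left₀ hp (by nlinarith) two_ne_zero
  have hN1 : (0 : ℝ) < 4 * (N - 1) ^ 2 := mul_pos four_pos (pow_pos (by linarith) 2)
  simp only [k]
  nlinarith [mul_lt_mul_of_pos_left hsq hN1]
end

theorem stmt_5 (n : ℕ) (hn : 6 ≤ n) (c : ℝ) (hc : c < 0) (y : ℝ) (hy : y > -(n^2 : ℝ) * c)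
    (α : ℝ → ℝ)
    (hα : ∀ z : ℝ, α z = n * c + ((n^2 - 2*n + 2 : ℝ) / (2 * (n - 1) * n)) * z
      - ((n - 2 : ℝ) / (2 * (n - 1))) * Real.sqrt (z^2 + 4 * (n - 1) * c * z)) :
    0 < deriv α y ∧ deriv α y < 1 / (n * (n - 1)) := by
  have hN : (2 : ℝ) < n := by norm_cast; omega
  obtain ⟨hr₁, hr₂⟩ := sqrt_quadratic_slope_bounds hN hc hy
  rw [funext hα, (hasDerivAt_affine_sub_mul_sqrt_quadratic _ _ _ _ y
    (sq_add_four_mul_sub_one_mul_pos hN hc hy)).deriv]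
  have hB : (0 : ℝ) < (n - 2) / (2 * (n - 1)) := div_pos (by linarith) (by linarith)
  constructor
  · calc (0 : ℝ) = (n ^ 2 - 2 * n + 2) / (2 * (n - 1) * n)
          - (n - 2) / (2 * (n - 1)) * ((n ^ 2 - 2 * n + 2) / (n * (n - 2))) := by
          field_simp [(by linarith : (n : ℝ) - 2 ≠ 0)]; ring
      _ < _ := by gcongr
  · calc _ < (n ^ 2 - 2 * n + 2 : ℝ) / (2 * (n - 1) * n) - (n - 2) / (2 * (n - 1)) * 1 := by
          gcongr
      _ = 1 / (n * (n - 1)) := by field_simp; ring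
end

section
/- For n ≥ 6, c < 0 and y > -n²c, one has y·α̊'(y) > α̊(y). -/
/-!
Writing `s = √(y² + k y)`, the Euler-type combination `y f' - f` of
`f z = A + B z - C √(z² + k z)` kills the linear part and equals `C k y / (2 s) - A`.
For `α̊` this is `c ((n - 2) y - n s) / s`, which is positive for `c < 0` because
`n² (y² + 4 (n - 1) c y) - (n - 2)² y² = 4 (n - 1) y (y + n² c) > 0`.
-/

open Real

lemma hasDerivAt_sqrt_sq_add_mul {k y : ℝ} (hy : y ^ 2 + k * y ≠ 0) :
    HasDerivAt (fun z => √(z ^ 2 + k * z)) ((2 * y + k) / (2 * √(y ^ 2 + k * y))) y := by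
  have hquad : HasDerivAt (fun z : ℝ => z ^ 2 + k * z) (2 * y + k) y :=
    ((hasDerivAt_pow 2 y).fun_add ((hasDerivAt_id' y).const_mul k)).congr_deriv (by ring)
  exact hquad.sqrt hy

lemma mul_deriv_sub_eq_of_eq_affine_sub_sqrt {f : ℝ → ℝ} {A B C k y : ℝ}
    (hf : ∀ z, f z = A + B * z - C * √(z ^ 2 + k * z)) (hy : 0 < y ^ 2 + k * y) :
    y * deriv f y - f y = C * k * y / (2 * √(y ^ 2 + k * y)) - A := by
  have hderiv : HasDerivAt f (B - C * ((2 * y + k) / (2 * √(y ^ 2 + k * y)))) y := by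
    rw [funext hf]
    exact ((((hasDerivAt_id' y).const_mul B).const_add A).fun_sub
      ((hasDerivAt_sqrt_sq_add_mul hy.ne').const_mul C)).congr_deriv (by ring)
  have hs : 0 < √(y ^ 2 + k * y) := sqrt_pos.mpr hy
  have hs2 : √(y ^ 2 + k * y) ^ 2 = y ^ 2 + k * y := sq_sqrt hy.le
  rw [hderiv.deriv, hf y]
  generalize √(y ^ 2 + k * y) = s at hs hs2 ⊢
  field_simp
  linear_combination (2 * C) * hs2

lemma sub_two_mul_lt_mul_sqrt {N c y : ℝ} (hN : 1 < N) (hy : 0 < y) (hyc : 0 < y + N ^ 2 * c) :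
    (N - 2) * y < N * √(y ^ 2 + 4 * (N - 1) * c * y) := by
  have hN0 : 0 ≤ N := by linarith
  rw [← sqrt_sq hN0, ← sqrt_mul (sq_nonneg N)]
  apply lt_sqrt_of_sq_lt
  rw [sqrt_sq hN0]
  have hgap : 0 < 4 * (N - 1) * y * (y + N ^ 2 * c) := by positivity
  linear_combination hgap

theorem stmt_8 (n : ℕ) (hn : 6 ≤ n) (c : ℝ) (hc : c < 0) (y : ℝ) (hy : y > -(n^2 : ℝ) * c)
    (α : ℝ → ℝ)
    (hα : ∀ z : ℝ, α z = n * c + ((n^2 - 2*n + 2 : ℝ) / (2 * (n - 1) * n)) * z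
      - ((n - 2 : ℝ) / (2 * (n - 1))) * Real.sqrt (z^2 + 4 * (n - 1) * c * z)) :
    y * deriv α y > α y := by
  have hn1 : (1 : ℝ) < n := by exact_mod_cast (by omega : 1 < n)
  have hypos : 0 < y := by nlinarith
  have hyc : 0 < y + (n : ℝ) ^ 2 * c := by linarith
  -- `n² ≥ 4 (n - 1)` makes `y + 4 (n - 1) c` positive as well
  have hquad : 0 < y ^ 2 + 4 * (n - 1) * c * y := by
    have : 0 < y + 4 * (n - 1) * c := by nlinarith [sq_nonneg ((n : ℝ) - 2)]
    nlinarith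
  have hs : 0 < √(y ^ 2 + 4 * (n - 1) * c * y) := sqrt_pos.mpr hquad
  have heuler := mul_deriv_sub_eq_of_eq_affine_sub_sqrt hα hquad
  have hgap := sub_two_mul_lt_mul_sqrt hn1 hypos hyc
  have hdiff : y * deriv α y - α y
      = c * ((n - 2) * y - n * √(y ^ 2 + 4 * (n - 1) * c * y)) / √(y ^ 2 + 4 * (n - 1) * c * y) := by
    rw [heuler]
    generalize √(y ^ 2 + 4 * (n - 1) * c * y) = s at hs ⊢
    have hn0 : (n : ℝ) - 1 ≠ 0 := by linarith
    field_simp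
    ring
  have hpos : 0 < y * deriv α y - α y := by
    rw [hdiff]
    exact div_pos (mul_pos_of_neg_of_neg hc (by linarith)) hs
  linarith
end

section
/- For n ≥ 6, c < 0 and y > -n²c, one has 2y·α̊''(y) + α̊'(y) < 2(n-1)/(n(n+2)). -/
/-!
Write `α̊(y) = nc + Ay - Bs` with `k = 2(n-1)c` and `s = √(y² + 2ky)`. Then
`α̊' = A - B(y+k)/s` and `α̊'' = Bk²/s³`, so
`2yα̊'' + α̊' = A - B y²(y+3k)/s³` and the claim becomes `(n²-4n+6) s³ < (n²-4) y²(y+3k)`.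
Squaring, with `w = y + 2k` and `p = -k`, this reads `(n²-4n+6)² < (n²-4)² (1 - φ(p/w))` for
`φ v = 3v² - 2v³`, which is increasing on `[0, 1]`. The hypothesis `y > -n²c` says exactly
`p/w < 2(n-1)/(n-2)²`, and at that endpoint the inequality holds precisely when `n ≥ 6`.
-/

open Real Filter Topology

def cubicWeight (v : ℝ) : ℝ := 3 * v ^ 2 - 2 * v ^ 3

lemma cubicWeight_strictMonoOn : StrictMonoOn cubicWeight (Set.Icc 0 1) := by
  rintro v ⟨hv, -⟩ v₀ ⟨-, hv₀⟩ hvv₀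
  have hfactor : cubicWeight v₀ - cubicWeight v
      = (v₀ - v) * (3 * (v₀ + v) - 2 * (v₀ ^ 2 + v₀ * v + v ^ 2)) := by
    unfold cubicWeight; ring
  have hpos : 0 < 3 * (v₀ + v) - 2 * (v₀ ^ 2 + v₀ * v + v ^ 2) := by
    nlinarith [mul_le_mul_of_nonneg_left hv₀ hv,
      mul_le_mul_of_nonneg_left hv₀ (hv.trans hvv₀.le)]
  nlinarith [mul_pos (sub_pos.2 hvv₀) hpos]

lemma sq_mul_cubicWeight_threshold_le {N : ℝ} (hN : 6 ≤ N) :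
    (N ^ 2 - 4) ^ 2 * cubicWeight (2 * (N - 1) / (N - 2) ^ 2)
      ≤ (N ^ 2 - 4) ^ 2 - (N ^ 2 - 4 * N + 6) ^ 2 := by
  have h2 : N - 2 ≠ 0 := by linarith
  have h6 : 0 ≤ N - 6 := by linarith
  have hquartic : 0 ≤ N ^ 3 * (N - 6) + 10 * N ^ 2 - 14 * N + 12 := by
    nlinarith [mul_nonneg (by positivity : (0 : ℝ) ≤ N ^ 3) h6]
  rw [← sub_nonneg]
  convert (by positivity :
    0 ≤ 8 * (N - 1) ^ 2 * (N - 6) * (N ^ 3 * (N - 6) + 10 * N ^ 2 - 14 * N + 12) / (N - 2) ^ 4)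
    using 1
  unfold cubicWeight
  field_simp
  ring

lemma sq_mul_pow_three_lt_of_threshold_lt {N p w : ℝ} (hN : 6 ≤ N) (hp : 0 < p)
    (hw : (N - 2) ^ 2 * p < 2 * (N - 1) * w) :
    (N ^ 2 - 4 * N + 6) ^ 2 * w ^ 3 < (N ^ 2 - 4) ^ 2 * ((w + 2 * p) * (w - p) ^ 2) := by
  have hN2 : 0 < (N - 2) ^ 2 := by nlinarith
  have hw0 : 0 < w := by nlinarith
  have hv : p / w < 2 * (N - 1) / (N - 2) ^ 2 := by rw [div_lt_div_iff₀ hw0 hN2]; linarith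
  have hv₀ : 2 * (N - 1) / (N - 2) ^ 2 ≤ 1 := by rw [div_le_one hN2]; nlinarith
  have hweight :
      (N ^ 2 - 4) ^ 2 * cubicWeight (p / w) < (N ^ 2 - 4) ^ 2 - (N ^ 2 - 4 * N + 6) ^ 2 :=
    (mul_lt_mul_of_pos_left (cubicWeight_strictMonoOn ⟨(div_pos hp hw0).le, hv.le.trans hv₀⟩
      ⟨(div_pos hp hw0).le.trans hv.le, hv₀⟩ hv) (by nlinarith)).trans_le
      (sq_mul_cubicWeight_threshold_le hN)
  have hexpand : (w + 2 * p) * (w - p) ^ 2 = w ^ 3 * (1 - cubicWeight (p / w)) := by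
    unfold cubicWeight
    field_simp
    ring
  rw [hexpand]
  nlinarith [pow_pos hw0 3]

lemma add_three_mul_pos_of_threshold_lt {N k y : ℝ} (hN : 6 ≤ N) (hk : k < 0)
    (hy : -N ^ 2 * k < 2 * (N - 1) * y) : 0 < y + 3 * k := by
  have hle : 2 * (N - 1) * -k ≤ (N - 2) ^ 2 * -k :=
    mul_le_mul_of_nonneg_right (by nlinarith) (by linarith)
  have hlt : 2 * (N - 1) * -k < 2 * (N - 1) * (y + 2 * k) := by linarith
  linarith [lt_of_mul_lt_mul_left hlt (by linarith)]

lemma mul_sqrt_quadratic_pow_three_lt {N k y : ℝ} (hN : 6 ≤ N) (hk : k < 0)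
    (hy : -N ^ 2 * k < 2 * (N - 1) * y) :
    (N ^ 2 - 4 * N + 6) * √(y ^ 2 + 2 * k * y) ^ 3 < (N ^ 2 - 4) * (y ^ 2 * (y + 3 * k)) := by
  have hy3k := add_three_mul_pos_of_threshold_lt hN hk hy
  have hy0 : 0 < y := by linarith
  have hcube := mul_lt_mul_of_pos_left
    (sq_mul_pow_three_lt_of_threshold_lt (w := y + 2 * k) hN (neg_pos.2 hk) (by linarith))
    (pow_pos hy0 3)
  have hsq : √(y ^ 2 + 2 * k * y) ^ 2 = y ^ 2 + 2 * k * y := sq_sqrt (by nlinarith)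
  have hA : 0 < N ^ 2 - 4 * N + 6 := by nlinarith
  have hB : 0 < N ^ 2 - 4 := by nlinarith
  rw [← pow_lt_pow_iff_left₀ (by positivity) (by positivity) two_ne_zero]
  calc ((N ^ 2 - 4 * N + 6) * √(y ^ 2 + 2 * k * y) ^ 3) ^ 2
      = (N ^ 2 - 4 * N + 6) ^ 2 * (√(y ^ 2 + 2 * k * y) ^ 2) ^ 3 := by ring
    _ = y ^ 3 * ((N ^ 2 - 4 * N + 6) ^ 2 * (y + 2 * k) ^ 3) := by rw [hsq]; ring
    _ < _ := hcube
    _ = _ := by ring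

lemma hasDerivAt_sqrt_quadratic {k z : ℝ} (hz : 0 < z ^ 2 + 2 * k * z) :
    HasDerivAt (fun x => √(x ^ 2 + 2 * k * x)) ((z + k) / √(z ^ 2 + 2 * k * z)) z := by
  have hq : HasDerivAt (fun x => x ^ 2 + 2 * k * x) (2 * z + 2 * k) z :=
    ((hasDerivAt_pow 2 z).fun_add ((hasDerivAt_id' z).const_mul (2 * k))).congr_deriv (by ring)
  refine (hq.sqrt hz.ne').congr_deriv ?_
  field_simp

lemma hasDerivAt_add_div_sqrt_quadratic {k z : ℝ} (hz : 0 < z ^ 2 + 2 * k * z) :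
    HasDerivAt (fun x => (x + k) / √(x ^ 2 + 2 * k * x))
      (-k ^ 2 / √(z ^ 2 + 2 * k * z) ^ 3) z := by
  have hs : 0 < √(z ^ 2 + 2 * k * z) := sqrt_pos.2 hz
  have hsq : √(z ^ 2 + 2 * k * z) ^ 2 = z ^ 2 + 2 * k * z := sq_sqrt hz.le
  refine (((hasDerivAt_id' z).add_const k).fun_div (hasDerivAt_sqrt_quadratic hz)
    hs.ne').congr_deriv ?_
  generalize √(z ^ 2 + 2 * k * z) = s at hs hsq ⊢
  field_simp
  linear_combination hsq

lemma hasDerivAt_affine_sub_sqrt_quadratic (a A B : ℝ) {k z : ℝ} (hz : 0 < z ^ 2 + 2 * k * z) :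
    HasDerivAt (fun x => a + A * x - B * √(x ^ 2 + 2 * k * x))
      (A - B * ((z + k) / √(z ^ 2 + 2 * k * z))) z :=
  ((((hasDerivAt_id' z).const_mul A).const_add a).fun_sub
    ((hasDerivAt_sqrt_quadratic hz).const_mul B)).congr_deriv (by ring)

lemma deriv_deriv_affine_sub_sqrt_quadratic (a A B : ℝ) {k z : ℝ} (hz : 0 < z ^ 2 + 2 * k * z) :
    deriv (deriv fun x => a + A * x - B * √(x ^ 2 + 2 * k * x)) z
      = B * k ^ 2 / √(z ^ 2 + 2 * k * z) ^ 3 := by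
  have hopen : IsOpen {x : ℝ | 0 < x ^ 2 + 2 * k * x} := isOpen_lt continuous_const (by fun_prop)
  have hderiv : (deriv fun x => a + A * x - B * √(x ^ 2 + 2 * k * x))
      =ᶠ[𝓝 z] fun x => A - B * ((x + k) / √(x ^ 2 + 2 * k * x)) := by
    filter_upwards [hopen.mem_nhds hz] with x hx
    exact (hasDerivAt_affine_sub_sqrt_quadratic a A B hx).deriv
  rw [hderiv.deriv_eq]
  exact ((((hasDerivAt_add_div_sqrt_quadratic hz).const_mul B).const_sub A).congr_deriv
    (by ring)).deriv

-- The closed form of `2yα̊''(y) + α̊'(y) - 2(n-1)/(n(n+2))`, where `s = √(y² + 2ky)`.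
lemma deriv_combination_sub_eq {N k y s : ℝ} (hN : 1 < N) (hs : 0 < s)
    (hsq : s ^ 2 = y ^ 2 + 2 * k * y) :
    2 * y * ((N - 2) / (2 * (N - 1)) * k ^ 2 / s ^ 3)
        + ((N ^ 2 - 2 * N + 2) / (2 * (N - 1) * N) - (N - 2) / (2 * (N - 1)) * ((y + k) / s))
        - 2 * (N - 1) / (N * (N + 2))
      = ((N ^ 2 - 4 * N + 6) * s ^ 3 - (N ^ 2 - 4) * (y ^ 2 * (y + 3 * k)))
        / (2 * (N - 1) * (N + 2) * s ^ 3) := by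
  have hN0 : N ≠ 0 := by linarith
  have hN1 : N - 1 ≠ 0 := by linarith
  have hN2 : N + 2 ≠ 0 := by linarith
  rw [show (y + k) / s = (y + k) * s ^ 2 / s ^ 3 by field_simp, hsq]
  field_simp
  ring

theorem stmt_9 (n : ℕ) (hn : 6 ≤ n) (c : ℝ) (hc : c < 0) (y : ℝ) (hy : y > -(n^2 : ℝ) * c)
    (α : ℝ → ℝ)
    (hα : ∀ z : ℝ, α z = n * c + ((n^2 - 2*n + 2 : ℝ) / (2 * (n - 1) * n)) * z
      - ((n - 2 : ℝ) / (2 * (n - 1))) * Real.sqrt (z^2 + 4 * (n - 1) * c * z)) :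
    2 * y * deriv (deriv α) y + deriv α y < 2 * ((n : ℝ) - 1) / (n * (n + 2)) := by
  have hN : (6 : ℝ) ≤ n := by exact_mod_cast hn
  set k := 2 * ((n : ℝ) - 1) * c with hk_def
  have hk : k < 0 := mul_neg_of_pos_of_neg (by linarith) hc
  have hyk : -(n : ℝ) ^ 2 * k < 2 * (n - 1) * y := by
    have := mul_lt_mul_of_pos_left hy (by linarith : (0 : ℝ) < 2 * (n - 1))
    linarith
  have hy3k := add_three_mul_pos_of_threshold_lt hN hk hyk
  have hq : 0 < y ^ 2 + 2 * k * y := by nlinarith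
  have hα_eq : α = fun z => n * c + ((n ^ 2 - 2 * n + 2 : ℝ) / (2 * (n - 1) * n)) * z
      - ((n - 2 : ℝ) / (2 * (n - 1))) * √(z ^ 2 + 2 * k * z) := by
    funext z; rw [hα z, hk_def]; ring_nf
  rw [hα_eq, deriv_deriv_affine_sub_sqrt_quadratic _ _ _ hq,
    (hasDerivAt_affine_sub_sqrt_quadratic _ _ _ hq).deriv]
  have hs : 0 < √(y ^ 2 + 2 * k * y) := sqrt_pos.2 hq
  rw [← sub_neg, deriv_combination_sub_eq (by linarith) hs (sq_sqrt hq.le)]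
  have hN1 : (0 : ℝ) < n - 1 := by linarith
  exact div_neg_of_neg_of_pos (sub_neg.2 (mul_sqrt_quadratic_pow_three_lt hN hk hyk))
    (by positivity)
end

section
/- For n ≥ 6, c < 0 and y > -n²c, one has 2 + (-1/n + α̊'(y))·(y/α̊(y)) < 0 and 1 - (α̊'(y)/α̊(y))·y < 0. -/
/-!
Write `s = √(y² + 4(n-1)cy)`. Multiplying `α̊(y)` by its conjugate `A y + nc + B s` (where
`α̊(y) = nc + A y - B s`) gives `(y/n + nc)²`, so `α̊ > 0`. Multiplied by `s`, both
`α̊'(y) y - α̊(y)` and `2α̊(y) + (α̊'(y) - 1/n) y` become linear in `s` with polynomial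
coefficients. The first equals `-c (n s - (n-2) y)`, positive since `n² s² - (n-2)² y² =
4(n-1) y (y + n² c)`. For the second, `s ≤ y + 2(n-1)c` reduces the claim to a polynomial
inequality, which has only positive coefficients in `n - 6`, `-c` and `y + n²c`.
-/

noncomputable def alphaRing (N c y : ℝ) : ℝ :=
  N * c + (N ^ 2 - 2 * N + 2) / (2 * (N - 1) * N) * y
    - (N - 2) / (2 * (N - 1)) * √(y ^ 2 + 4 * (N - 1) * c * y)

namespace alphaRing

variable {N c y : ℝ}

lemma radicand_pos (hc : c < 0) (hy : -N ^ 2 * c < y) : 0 < y ^ 2 + 4 * (N - 1) * c * y := by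
  have hy0 : 0 < y := by nlinarith [sq_nonneg N]
  have : 0 < y + 4 * (N - 1) * c := by nlinarith [sq_nonneg (N - 2)]
  nlinarith

lemma sqrt_radicand_le (h : 0 ≤ y + 2 * (N - 1) * c) :
    √(y ^ 2 + 4 * (N - 1) * c * y) ≤ y + 2 * (N - 1) * c :=
  Real.sqrt_le_iff.mpr ⟨h, by nlinarith [sq_nonneg ((N - 1) * c)]⟩

lemma hasDerivAt (h : y ^ 2 + 4 * (N - 1) * c * y ≠ 0) :
    HasDerivAt (alphaRing N c)
      ((N ^ 2 - 2 * N + 2) / (2 * (N - 1) * N)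
        - (N - 2) / (2 * (N - 1)) * ((y + 2 * (N - 1) * c) / √(y ^ 2 + 4 * (N - 1) * c * y))) y := by
  have hrad : HasDerivAt (fun z => z ^ 2 + 4 * (N - 1) * c * z) (2 * y + 4 * (N - 1) * c) y := by
    refine ((hasDerivAt_pow 2 y).add ((hasDerivAt_id y).const_mul _)).congr_deriv ?_
    push_cast
    ring
  refine (((hasDerivAt_id y).const_mul _).const_add (N * c)
    |>.sub (((Real.hasDerivAt_sqrt h).comp y hrad).const_mul _)).congr_deriv ?_
  field_simp
  ring

lemma mul_conj (hN0 : N ≠ 0) (hN1 : N ≠ 1) (h : 0 ≤ y ^ 2 + 4 * (N - 1) * c * y) :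
    alphaRing N c y * ((N ^ 2 - 2 * N + 2) / (2 * (N - 1) * N) * y + N * c
      + (N - 2) / (2 * (N - 1)) * √(y ^ 2 + 4 * (N - 1) * c * y)) = (y / N + N * c) ^ 2 := by
  have hN1' : N - 1 ≠ 0 := sub_ne_zero.mpr hN1
  have hs := Real.sq_sqrt h
  unfold alphaRing
  generalize √(y ^ 2 + 4 * (N - 1) * c * y) = s at hs ⊢
  field_simp
  linear_combination (-(N * (N - 2)) ^ 2) * hs

lemma pos (hN : 2 ≤ N) (hc : c < 0) (hy : -N ^ 2 * c < y) : 0 < alphaRing N c y := by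
  have hrad := radicand_pos hc hy
  have hlin : 0 < (N ^ 2 - 2 * N + 2) / (2 * (N - 1) * N) * y + N * c := by
    have hden : 0 < 2 * (N - 1) * N := by nlinarith
    rw [div_mul_eq_mul_div, div_add' _ _ _ hden.ne']
    apply div_pos _ hden
    nlinarith [sq_nonneg (N - 1), sq_nonneg (N - 2),
      mul_nonneg (neg_nonneg.mpr hc.le) (sq_nonneg (N * (N - 2)))]
  have hconj : 0 < (N ^ 2 - 2 * N + 2) / (2 * (N - 1) * N) * y + N * c
      + (N - 2) / (2 * (N - 1)) * √(y ^ 2 + 4 * (N - 1) * c * y) := by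
    have : 0 ≤ (N - 2) / (2 * (N - 1)) * √(y ^ 2 + 4 * (N - 1) * c * y) := by
      exact mul_nonneg (div_nonneg (by linarith) (by linarith)) (Real.sqrt_nonneg _)
    linarith
  have hsq : 0 < (y / N + N * c) ^ 2 := by
    have : 0 < y / N + N * c := by
      rw [div_add' _ _ _ (by positivity)]
      exact div_pos (by nlinarith) (by positivity)
    positivity
  rw [← mul_conj (by positivity) (by linarith) hrad.le] at hsq
  exact pos_of_mul_pos_left hsq hconj.le

lemma lt_deriv_mul (hN : 1 < N) (hc : c < 0) (hy : -N ^ 2 * c < y) :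
    alphaRing N c y < deriv (alphaRing N c) y * y := by
  have hrad := radicand_pos hc hy
  have hs := Real.sq_sqrt hrad.le
  have hspos := Real.sqrt_pos.mpr hrad
  rw [(hasDerivAt hrad.ne').deriv, ← sub_pos]
  unfold alphaRing
  generalize √(y ^ 2 + 4 * (N - 1) * c * y) = s at hs hspos ⊢
  have hy0 : 0 < y := by nlinarith [sq_nonneg N]
  have hcmp : (N - 2) * y < N * s := by
    refine lt_of_pow_lt_pow_left₀ 2 (by positivity) ?_
    rw [mul_pow N, hs]
    nlinarith [mul_pos (mul_pos (sub_pos.mpr hN) hy0) (show 0 < y + N ^ 2 * c by linarith)]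
  refine pos_of_mul_pos_left ((mul_pos (neg_pos.mpr hc) (sub_pos.mpr hcmp)).trans_eq ?_) hspos.le
  have : N - 1 ≠ 0 := by linarith
  have : N ≠ 0 := by linarith
  field_simp
  linear_combination (-N * (N - 2)) * hs

lemma polynomial_ineq (hN : 6 ≤ N) (hc : c < 0) (hy : -N ^ 2 * c < y) :
    (4 * N ^ 2 * (N - 1) * c + (3 * N ^ 2 - 8 * N + 8) * y) * (y + 2 * (N - 1) * c)
      < N * (N - 2) * (3 * y ^ 2 + 10 * (N - 1) * c * y) := by
  obtain ⟨m, hm, rfl⟩ : ∃ m, 0 ≤ m ∧ N = m + 6 := ⟨N - 6, by linarith, by ring⟩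
  obtain ⟨t, ht, rfl⟩ : ∃ t, 0 < t ∧ c = -t := ⟨-c, by linarith, by ring⟩
  obtain ⟨u, hu, rfl⟩ : ∃ u, 0 < u ∧ y = u + (m + 6) ^ 2 * t :=
    ⟨y + (m + 6) ^ 2 * -t, by linarith, by ring⟩
  rw [← sub_pos]
  ring_nf
  positivity

lemma mul_sqrt_radicand_lt (hN : 6 ≤ N) (hc : c < 0) (hy : -N ^ 2 * c < y) :
    (4 * N ^ 2 * (N - 1) * c + (3 * N ^ 2 - 8 * N + 8) * y) * √(y ^ 2 + 4 * (N - 1) * c * y)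
      < N * (N - 2) * (3 * y ^ 2 + 10 * (N - 1) * c * y) := by
  rcases le_or_gt (4 * N ^ 2 * (N - 1) * c + (3 * N ^ 2 - 8 * N + 8) * y) 0 with hM | hM
  · have hy0 : 0 < y := by nlinarith [sq_nonneg N]
    have : 0 < 3 * y + 10 * (N - 1) * c := by nlinarith [sq_nonneg (3 * N - 5)]
    calc _ ≤ 0 := mul_nonpos_of_nonpos_of_nonneg hM (Real.sqrt_nonneg _)
      _ < N * (N - 2) * (y * (3 * y + 10 * (N - 1) * c)) := by
        have : 0 < N * (N - 2) := by nlinarith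
        positivity
      _ = _ := by ring
  · have : 0 ≤ y + 2 * (N - 1) * c := by nlinarith [sq_nonneg (N - 1)]
    calc _ ≤ (4 * N ^ 2 * (N - 1) * c + (3 * N ^ 2 - 8 * N + 8) * y) * (y + 2 * (N - 1) * c) :=
          mul_le_mul_of_nonneg_left (sqrt_radicand_le this) hM.le
      _ < _ := polynomial_ineq hN hc hy

lemma two_mul_add_deriv_mul_neg (hN : 6 ≤ N) (hc : c < 0) (hy : -N ^ 2 * c < y) :
    2 * alphaRing N c y + (-(1 / N) + deriv (alphaRing N c) y) * y < 0 := by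
  have hrad := radicand_pos hc hy
  have hs := Real.sq_sqrt hrad.le
  have hspos := Real.sqrt_pos.mpr hrad
  have hlt := sub_neg.mpr (mul_sqrt_radicand_lt hN hc hy)
  rw [(hasDerivAt hrad.ne').deriv]
  unfold alphaRing
  generalize √(y ^ 2 + 4 * (N - 1) * c * y) = s at hs hspos hlt ⊢
  have hk : 0 < 2 * (N - 1) * N * s := by
    have : 0 < N - 1 := by linarith
    positivity
  refine neg_of_mul_neg_left (hlt.trans_eq' ?_) hk.le
  have : N - 1 ≠ 0 := by linarith
  have : N ≠ 0 := by linarith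
  field_simp
  linear_combination (2 * N * (N - 2)) * hs

end alphaRing

theorem stmt_11 (n : ℕ) (hn : 6 ≤ n) (c : ℝ) (hc : c < 0) (y : ℝ) (hy : y > -(n^2 : ℝ) * c)
    (α : ℝ → ℝ)
    (hα : ∀ z : ℝ, α z = n * c + ((n^2 - 2*n + 2 : ℝ) / (2 * (n - 1) * n)) * z
      - ((n - 2 : ℝ) / (2 * (n - 1))) * Real.sqrt (z^2 + 4 * (n - 1) * c * z)) :
    2 + (-(1 / (n : ℝ)) + deriv α y) * (y / α y) < 0 ∧
    1 - deriv α y / α y * y < 0 := by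
  obtain rfl : α = alphaRing n c := funext hα
  have hN : (6 : ℝ) ≤ n := by exact_mod_cast hn
  have hpos := alphaRing.pos (by linarith) hc hy
  constructor
  · calc 2 + (-(1 / (n : ℝ)) + deriv (alphaRing n c) y) * (y / alphaRing n c y)
        = (2 * alphaRing n c y + (-(1 / (n : ℝ)) + deriv (alphaRing n c) y) * y)
            / alphaRing n c y := by field_simp
      _ < 0 := div_neg_of_neg_of_pos (alphaRing.two_mul_add_deriv_mul_neg hN hc hy) hpos
  · rw [div_mul_eq_mul_div, sub_neg, one_lt_div hpos]
    exact alphaRing.lt_deriv_mul (by linarith) hc hy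
end

section
/- Let λ, μ > 0 with λμ = -c and λ > √(-c), where c < 0, and let n ≥ 3. Then setting |H| = (n-1)λ + μ and |h|² = (n-1)λ² + μ², one has |H| > n√(-c) and (n-1)λ² + μ² = nc + n|H|²/(2(n-1)) - ((n-2)/(2(n-1)))·√(|H|⁴ + 4(n-1)c|H|²). -/
/-!
Write `s = √(-c)`, so that `λμ = s²` and `s < λ`. Then `μ < λ`, and the inequality follows from
`((n-1)λ + μ - n s) λ = (λ - s)((n-1)λ - s)`. For the equality, `c = -λμ` makes the radicand a
perfect square, `|H|⁴ + 4(n-1)c|H|² = (|H| ((n-1)λ - μ))²`, after which both sides are rational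
functions of `λ, μ, n` that agree.
-/

lemma lt_of_mul_eq_sq {s lam mu : ℝ} (hs : 0 ≤ s) (hlt : s < lam) (hprod : lam * mu = s ^ 2) :
    mu < lam := by
  have hlam : 0 < lam := hs.trans_lt hlt
  refine lt_of_mul_lt_mul_left ?_ hlam.le
  rw [hprod, ← sq]
  exact pow_lt_pow_left₀ hlt hs two_ne_zero

lemma add_mul_lt_mul_add_of_mul_eq_sq {k s lam mu : ℝ} (hk : 1 ≤ k) (hs : 0 ≤ s) (hlt : s < lam)
    (hprod : lam * mu = s ^ 2) : (k + 1) * s < k * lam + mu := by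
  have hlam : 0 < lam := hs.trans_lt hlt
  have hfactor : (k * lam + mu - (k + 1) * s) * lam = (lam - s) * (k * lam - s) := by
    linear_combination hprod
  have hpos : 0 < (lam - s) * (k * lam - s) := mul_pos (by linarith) (by nlinarith)
  rw [← hfactor] at hpos
  linarith [pos_of_mul_pos_left hpos hlam.le]

lemma sqrt_pow_four_add_mul_sq {k c lam mu : ℝ} (hprod : lam * mu = -c) (hle : mu ≤ k * lam)
    (hH : 0 ≤ k * lam + mu) :
    √((k * lam + mu) ^ 4 + 4 * k * c * (k * lam + mu) ^ 2) = (k * lam + mu) * (k * lam - mu) := by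
  have hsq : (k * lam + mu) ^ 4 + 4 * k * c * (k * lam + mu) ^ 2
      = ((k * lam + mu) * (k * lam - mu)) ^ 2 := by
    rw [show c = -(lam * mu) by linarith]; ring
  rw [hsq, Real.sqrt_sq (mul_nonneg hH (by linarith))]

theorem stmt_14_general (n : ℕ) (hn : 3 ≤ n) (c : ℝ) (hc : c < 0) (lam mu : ℝ)
    (hprod : lam * mu = -c)
    (hbig : lam > Real.sqrt (-c)) :
    ((n : ℝ) - 1) * lam + mu > n * Real.sqrt (-c) ∧
    ((n : ℝ) - 1) * lam^2 + mu^2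
      = n * c + (n / (2 * ((n : ℝ) - 1))) * (((n : ℝ) - 1) * lam + mu)^2
        - (((n : ℝ) - 2) / (2 * ((n : ℝ) - 1))) *
          Real.sqrt ((((n : ℝ) - 1) * lam + mu)^4
            + 4 * ((n : ℝ) - 1) * c * (((n : ℝ) - 1) * lam + mu)^2) := by
  have hn3 : (3 : ℝ) ≤ n := by exact_mod_cast hn
  have hs : 0 ≤ √(-c) := Real.sqrt_nonneg _
  have hprod' : lam * mu = √(-c) ^ 2 := by rw [Real.sq_sqrt (by linarith), hprod]
  have hmu_lt : mu < lam := lt_of_mul_eq_sq hs hbig hprod'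
  have hmean := add_mul_lt_mul_add_of_mul_eq_sq (k := (n : ℝ) - 1) (by linarith) hs hbig hprod'
  rw [sub_add_cancel] at hmean
  refine ⟨hmean, ?_⟩
  rw [sqrt_pow_four_add_mul_sq hprod (by nlinarith) (by nlinarith),
    show c = -(lam * mu) by linarith]
  have hn1 : (n : ℝ) - 1 ≠ 0 := by linarith
  field_simp
  ring

theorem stmt_14 (n : ℕ) (hn : 3 ≤ n) (c : ℝ) (hc : c < 0) (lam mu : ℝ)
    (hlam : 0 < lam) (hmu : 0 < mu) (hprod : lam * mu = -c)
    (hbig : lam > Real.sqrt (-c)) :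
    ((n : ℝ) - 1) * lam + mu > n * Real.sqrt (-c) ∧
    ((n : ℝ) - 1) * lam^2 + mu^2
      = n * c + (n / (2 * ((n : ℝ) - 1))) * (((n : ℝ) - 1) * lam + mu)^2
        - (((n : ℝ) - 2) / (2 * ((n : ℝ) - 1))) *
          Real.sqrt ((((n : ℝ) - 1) * lam + mu)^4
            + 4 * ((n : ℝ) - 1) * c * (((n : ℝ) - 1) * lam + mu)^2) :=
  stmt_14_general n hn c hc lam mu hprod hbig
end

section
/- For n = 5 and c < 0, the function β̊(x) = β(x) - x/5, where β(x) = (5/11)c + (15/88)x + (√7/88)·√(7x² + 272cx + 4000c²), satisfies max{x/20 + 2c, 0} < β̊(x) for all x > -25c. -/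
/-!
With `s = √(7 Q)`, where `Q = 7x² + 272cx + 4000c²`, one has `β̊(x) = (200c - 13x + 5s) / 440`.
So `β̊(x) > x/20 + 2c` says `s > 7x + 136c`, and `β̊(x) > 0` says `s > (13x - 200c) / 5`.
Both follow from `lt_sqrt_of_sq_lt`, because of the identities
`7Q - (7x + 136c)² = 9504c²` and `25 · 7Q - (13x - 200c)² = 1056(x + 25c)²`.
-/

lemma sq_lt_seven_mul_radicand_of_ne_zero {c : ℝ} (hc : c ≠ 0) (x : ℝ) :
    (7 * x + 136 * c) ^ 2 < 7 * (7 * x ^ 2 + 272 * c * x + 4000 * c ^ 2) := by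
  have hgap : 7 * (7 * x ^ 2 + 272 * c * x + 4000 * c ^ 2) - (7 * x + 136 * c) ^ 2
      = 9504 * c ^ 2 := by ring
  have : 0 < 9504 * c ^ 2 := by positivity
  linarith

lemma sq_lt_seven_mul_radicand_of_lt {c x : ℝ} (hx : -25 * c < x) :
    ((13 * x - 200 * c) / 5) ^ 2 < 7 * (7 * x ^ 2 + 272 * c * x + 4000 * c ^ 2) := by
  have hgap : 7 * (7 * x ^ 2 + 272 * c * x + 4000 * c ^ 2) - ((13 * x - 200 * c) / 5) ^ 2
      = 1056 / 25 * (x + 25 * c) ^ 2 := by ring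
  have : 0 < 1056 / 25 * (x + 25 * c) ^ 2 := by
    have : x + 25 * c ≠ 0 := by linarith
    positivity
  linarith

theorem stmt_18 (c : ℝ) (hc : c < 0) (x : ℝ) (hx : x > -25 * c) :
    max (x / 20 + 2 * c) 0 <
      ((5:ℝ)/11 * c + (15:ℝ)/88 * x
        + Real.sqrt 7 / 88 * Real.sqrt (7 * x^2 + 272 * c * x + 4000 * c^2)) - x / 5 := by
  have hβ : (5:ℝ)/11 * c + (15:ℝ)/88 * x
      + Real.sqrt 7 / 88 * Real.sqrt (7 * x^2 + 272 * c * x + 4000 * c^2) - x / 5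
      = (200 * c - 13 * x
          + 5 * Real.sqrt (7 * (7 * x ^ 2 + 272 * c * x + 4000 * c ^ 2))) / 440 := by
    rw [Real.sqrt_mul (by norm_num : (0:ℝ) ≤ 7)]
    ring
  set s := Real.sqrt (7 * (7 * x ^ 2 + 272 * c * x + 4000 * c ^ 2))
  have hs₁ : 7 * x + 136 * c < s :=
    Real.lt_sqrt_of_sq_lt (sq_lt_seven_mul_radicand_of_ne_zero hc.ne x)
  have hs₂ : (13 * x - 200 * c) / 5 < s :=
    Real.lt_sqrt_of_sq_lt (sq_lt_seven_mul_radicand_of_lt hx)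
  rw [hβ, max_lt_iff]
  constructor <;> linarith
end

section
/- For n = 5 and c < 0, the function β̊(x) = β(x) - x/5 satisfies 2x·β̊''(x) + β̊'(x) < 8/35 for all x > -25c. -/
/-!
With `Q = 7x² + 272cx + 4000c²` one has `β̊' = -13/440 + (√7/88)(7x + 136c)/√Q`, and the identity
`7Q = (7x + 136c)² + 9504c²` collapses the second derivative to `β̊'' = 108√7 c² / Q^{3/2}`.
Clearing the denominator `Q^{3/2}` and squaring turns the claim into a polynomial inequality,
homogeneous of degree 6, whose coefficients are all positive in the variables `x + 25c` and `-c`.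
-/

open Real

noncomputable section

def radicand (c z : ℝ) : ℝ := 7 * z ^ 2 + 272 * c * z + 4000 * c ^ 2

/-- The paper's `β̊ = β - x/5` for `n = 5`. -/
def betaRing (c z : ℝ) : ℝ :=
  5 / 11 * c + 15 / 88 * z + √7 / 88 * √(radicand c z) - z / 5

end

lemma seven_mul_radicand (c z : ℝ) :
    7 * radicand c z = (7 * z + 136 * c) ^ 2 + 9504 * c ^ 2 := by
  unfold radicand; ring

section
variable {c : ℝ}

lemma radicand_pos (hc : c ≠ 0) (z : ℝ) : 0 < radicand c z := by
  have := seven_mul_radicand c z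
  have : 0 < c ^ 2 := by positivity
  nlinarith [sq_nonneg (7 * z + 136 * c)]

lemma hasDerivAt_sqrt_radicand (hc : c ≠ 0) (z : ℝ) :
    HasDerivAt (fun y => √(radicand c y)) ((7 * z + 136 * c) / √(radicand c z)) z := by
  have hQ : HasDerivAt (radicand c) (14 * z + 272 * c) z := by
    unfold radicand
    refine ((((hasDerivAt_pow 2 z).const_mul 7).add ((hasDerivAt_id' z).const_mul (272 * c))).add_const
      (4000 * c ^ 2)).congr_deriv ?_
    simp only [Nat.cast_ofNat, Nat.add_one_sub_one, pow_one, mul_one, add_left_inj]; ring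
  refine (hQ.sqrt (radicand_pos hc z).ne').congr_deriv ?_
  field_simp; ring

lemma hasDerivAt_betaRing (hc : c ≠ 0) (z : ℝ) :
    HasDerivAt (betaRing c) (-13 / 440 + √7 / 88 * ((7 * z + 136 * c) / √(radicand c z))) z := by
  unfold betaRing
  refine ((((hasDerivAt_id' z).const_mul (15 / 88)).const_add (5 / 11 * c)).add
    ((hasDerivAt_sqrt_radicand hc z).const_mul (√7 / 88))).sub ((hasDerivAt_id' z).div_const 5)
    |>.congr_deriv ?_
  ring

lemma deriv_betaRing (hc : c ≠ 0) :
    deriv (betaRing c) = fun z => -13 / 440 + √7 / 88 * ((7 * z + 136 * c) / √(radicand c z)) :=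
  funext fun z => (hasDerivAt_betaRing hc z).deriv

lemma hasDerivAt_deriv_betaRing (hc : c ≠ 0) (z : ℝ) :
    HasDerivAt (deriv (betaRing c)) (108 * √7 * c ^ 2 / (radicand c z * √(radicand c z))) z := by
  have hQ := radicand_pos hc z
  have hs : √(radicand c z) ≠ 0 := (sqrt_pos.2 hQ).ne'
  rw [deriv_betaRing hc]
  refine ((((hasDerivAt_id' z).const_mul 7).add_const (136 * c)).div
    (hasDerivAt_sqrt_radicand hc z) hs |>.const_mul (√7 / 88)).const_add (-13 / 440)
    |>.congr_deriv ?_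
  field_simp
  rw [sq_sqrt hQ.le]
  linear_combination radicand c z * seven_mul_radicand c z

/-- The difference vanishes at `x = -25c`: the bound `8/35` is attained at the endpoint. -/
lemma radicand_cube_gt (hc : c < 0) {x : ℝ} (hx : -25 * c < x) :
    343 * (19008 * c ^ 2 * x + (7 * x + 136 * c) * radicand c x) ^ 2 < 25281 * radicand c x ^ 3 := by
  obtain ⟨d, hd, rfl⟩ : ∃ d, 0 < d ∧ x = d - 25 * c := ⟨x + 25 * c, by linarith, by ring⟩
  obtain ⟨e, he, rfl⟩ : ∃ e, 0 < e ∧ c = -e := ⟨-c, by linarith, by ring⟩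
  rw [← sub_pos]
  convert_to 0 < 2499041160000 * d * e ^ 5 + 1366995722400 * d ^ 2 * e ^ 4
    + 105818752512 * d ^ 3 * e ^ 3 + 7741331136 * d ^ 4 * e ^ 2 + 262342080 * d ^ 5 * e
    + 7847840 * d ^ 6
  · unfold radicand; ring
  positivity

lemma two_mul_deriv_deriv_add_deriv_lt (hc : c < 0) {x : ℝ} (hx : -25 * c < x) :
    2 * x * (108 * √7 * c ^ 2 / (radicand c x * √(radicand c x)))
      + (-13 / 440 + √7 / 88 * ((7 * x + 136 * c) / √(radicand c x))) < 8 / 35 := by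
  have hQ := radicand_pos hc.ne x
  have hs := sqrt_pos.2 hQ
  have key : 7 * √7 * (19008 * c ^ 2 * x + (7 * x + 136 * c) * radicand c x)
      < 159 * radicand c x * √(radicand c x) := by
    refine lt_of_pow_lt_pow_left₀ 2 (by positivity) ?_
    calc (7 * √7 * (19008 * c ^ 2 * x + (7 * x + 136 * c) * radicand c x)) ^ 2
        = 343 * (19008 * c ^ 2 * x + (7 * x + 136 * c) * radicand c x) ^ 2 := by
          rw [mul_pow, mul_pow, sq_sqrt (by norm_num)]; ring
      _ < 25281 * radicand c x ^ 3 := radicand_cube_gt hc hx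
      _ = (159 * radicand c x * √(radicand c x)) ^ 2 := by
          rw [mul_pow, sq_sqrt hQ.le]; ring
  rw [← sub_neg]
  convert_to (7 * √7 * (19008 * c ^ 2 * x + (7 * x + 136 * c) * radicand c x)
      - 159 * radicand c x * √(radicand c x)) / (616 * radicand c x * √(radicand c x)) < 0
  · field_simp; ring
  exact div_neg_of_neg_of_pos (by linarith) (by positivity)

end

theorem stmt_19 (c : ℝ) (hc : c < 0) (x : ℝ) (hx : x > -25 * c)
    (β : ℝ → ℝ)
    (hβ : ∀ z : ℝ, β z = (5:ℝ)/11 * c + (15:ℝ)/88 * z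
      + Real.sqrt 7 / 88 * Real.sqrt (7 * z^2 + 272 * c * z + 4000 * c^2) - z / 5) :
    2 * x * deriv (deriv β) x + deriv β x < 8 / 35 := by
  obtain rfl : β = betaRing c := funext hβ
  rw [(hasDerivAt_deriv_betaRing hc.ne x).deriv, (hasDerivAt_betaRing hc.ne x).deriv]
  exact two_mul_deriv_deriv_add_deriv_lt hc hx
end
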